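/- arXiv:2211.10659 — 3 statements merged into one kernel-verified Lean document; each statement's English description precedes it below -/
import Mathlib

section
/- Let μ > 0, λ ∈ ℝ, N ≥ 5, 2** = 2N/(N−4), S > 0 the best Sobolev constant with ‖u‖²_{2**} ≤ S^{-1}‖Δu‖²₂ for u ∈ H₀²(Ω). Then for every u ∈ H₀²(Ω), −(λ/2)‖u‖²₂ + (μ/2)‖u‖²₂ − (μ/2)∫_Ω u² ln u² dx ≥ −(μ/(2**−2)) e^{−λ/μ−1+2**λ/(2μ)} S^{−2**/2} ‖Δu‖₂^{2**}. -/
/-!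
Write `c = λ/μ` and `q = 2**/2`. For `a = u² ≥ 0` the elementary bound `log t ≤ t^σ / (σ e)`,
applied to `t = e^c a` with `σ = q - 1`, gives `a log a ≤ e^{cσ-1}/σ · a^q - c a`. Integrating,
`∫ u² log u² ≤ e^{cσ-1}/σ · ∫ |u|^{2**} - c ∫ u²`; the `c ∫ u²` term cancels `-(λ/2)‖u‖²₂`, the
remaining `(μ/2)‖u‖²₂` is nonnegative, and the Sobolev inequality bounds `∫ |u|^{2**}` by
`S^{-2**/2} ‖Δu‖₂^{2**}`.
-/

open MeasureTheory

namespace Real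

lemma log_le_rpow_div_mul_exp_one {t σ : ℝ} (ht : 0 < t) (hσ : 0 < σ) :
    log t ≤ t ^ σ / (σ * exp 1) := by
  have h := log_le_sub_one_of_pos (show 0 < t ^ σ / exp 1 by positivity)
  rw [log_div (by positivity) (exp_ne_zero 1), log_rpow ht, log_exp] at h
  rw [le_div_iff₀ (by positivity)]
  calc log t * (σ * exp 1) = σ * log t * exp 1 := by ring
    _ ≤ t ^ σ := (le_div_iff₀ (exp_pos 1)).1 (by linarith)

lemma mul_log_le_rpow_sub {q : ℝ} (hq : 1 < q) (c : ℝ) {a : ℝ} (ha : 0 ≤ a) :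
    a * log a ≤ exp (c * (q - 1) - 1) / (q - 1) * a ^ q - c * a := by
  rcases ha.eq_or_lt with rfl | ha
  · simp [zero_rpow (by linarith : q ≠ 0)]
  have hlog : c + log a ≤ exp (c * (q - 1) - 1) / (q - 1) * a ^ (q - 1) := by
    have h := log_le_rpow_div_mul_exp_one (by positivity : 0 < exp c * a) (by linarith : 0 < q - 1)
    rw [log_mul (exp_ne_zero c) ha.ne', log_exp, mul_rpow (exp_pos c).le ha.le, ← exp_mul] at h
    rw [exp_sub]
    convert h using 1
    field_simp
  calc a * log a ≤ a * (exp (c * (q - 1) - 1) / (q - 1) * a ^ (q - 1) - c) :=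
        mul_le_mul_of_nonneg_left (by linarith) ha.le
    _ = exp (c * (q - 1) - 1) / (q - 1) * a ^ q - c * a := by
        rw [rpow_sub ha, rpow_one]
        field_simp

lemma sq_rpow_half (x p : ℝ) : (x ^ 2) ^ (p / 2) = |x| ^ p := by
  rw [← sq_abs, ← rpow_two, ← rpow_mul (abs_nonneg x)]
  ring_nf

lemma inv_mul_sq_rpow_half {S K : ℝ} (hS : 0 ≤ S) (hK : 0 ≤ K) (p : ℝ) :
    (S⁻¹ * K ^ 2) ^ (p / 2) = S ^ (-(p / 2)) * K ^ p := by
  rw [mul_rpow (inv_nonneg.2 hS) (sq_nonneg K), inv_rpow hS, rpow_neg hS, sq_rpow_half,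
    abs_of_nonneg hK]

end Real

open Real

theorem MeasureTheory.integral_mul_log_le {α : Type*} [MeasurableSpace α] {ν : Measure α}
    {f : α → ℝ} (hf : ∀ x, 0 ≤ f x) {q : ℝ} (hq : 1 < q) (c : ℝ) (hf_int : Integrable f ν)
    (hf_log : Integrable (fun x => f x * log (f x)) ν) (hf_q : Integrable (fun x => f x ^ q) ν) :
    ∫ x, f x * log (f x) ∂ν
      ≤ exp (c * (q - 1) - 1) / (q - 1) * ∫ x, f x ^ q ∂ν - c * ∫ x, f x ∂ν := by
  rw [← integral_const_mul, ← integral_const_mul, ← integral_sub (hf_q.const_mul _)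
    (hf_int.const_mul _)]
  exact integral_mono hf_log ((hf_q.const_mul _).sub (hf_int.const_mul _))
    fun x => mul_log_le_rpow_sub hq c (hf x)

theorem stmt7 {α : Type*} [MeasurableSpace α] (ν : Measure α) {N : ℕ} (hN : 5 ≤ N)
    (lam mu S K p : ℝ) (hmu : 0 < mu) (hS : 0 < S) (hK : 0 ≤ K)
    (hp : p = 2 * (N : ℝ) / ((N : ℝ) - 4)) (u : α → ℝ)
    (hu2 : Integrable (fun x => u x ^ 2) ν)
    (hulog : Integrable (fun x => u x ^ 2 * Real.log (u x ^ 2)) ν)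
    (hup : Integrable (fun x => |u x| ^ p) ν)
    (sobolev : (∫ x, |u x| ^ p ∂ν) ^ (2 / p) ≤ S⁻¹ * K ^ 2) :
    -(lam / 2) * (∫ x, u x ^ 2 ∂ν) + mu / 2 * (∫ x, u x ^ 2 ∂ν)
        - mu / 2 * (∫ x, u x ^ 2 * Real.log (u x ^ 2) ∂ν)
      ≥ -(mu / (p - 2)) * Real.exp (-lam / mu - 1 + p * lam / (2 * mu))
          * S ^ (-(p / 2)) * K ^ p := by
  have hp2 : 2 < p := by
    have hN5 : (5 : ℝ) ≤ N := by exact_mod_cast hN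
    rw [hp, lt_div_iff₀ (by linarith)]
    linarith
  have hpow : (fun x => (u x ^ 2) ^ (p / 2)) = fun x => |u x| ^ p :=
    funext fun x => sq_rpow_half (u x) p
  have hlog := integral_mul_log_le (fun x => sq_nonneg (u x)) (by linarith : 1 < p / 2)
    (lam / mu) hu2 hulog (hpow ▸ hup)
  rw [hpow] at hlog
  have hsob : ∫ x, |u x| ^ p ∂ν ≤ S ^ (-(p / 2)) * K ^ p := by
    rw [← inv_mul_sq_rpow_half hS.le hK]
    refine (rpow_inv_le_iff_of_pos (integral_nonneg fun x => by positivity) (by positivity)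
      (by linarith)).1 ?_
    rwa [inv_div]
  have hconst : mu / 2 * (exp (lam / mu * (p / 2 - 1) - 1) / (p / 2 - 1))
      = mu / (p - 2) * exp (-lam / mu - 1 + p * lam / (2 * mu)) := by
    have hp2' : p - 2 ≠ 0 := by linarith
    rw [show lam / mu * (p / 2 - 1) - 1 = -lam / mu - 1 + p * lam / (2 * mu) by field_simp; ring]
    field_simp
  have hC : 0 ≤ mu / (p - 2) * exp (-lam / mu - 1 + p * lam / (2 * mu)) :=
    mul_nonneg (div_nonneg hmu.le (by linarith)) (exp_nonneg _)
  have hlam : mu / 2 * (lam / mu) = lam / 2 := by field_simp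
  have hL := mul_le_mul_of_nonneg_left hlog (by positivity : 0 ≤ mu / 2)
  rw [mul_sub, ← mul_assoc, hconst, ← mul_assoc, hlam] at hL
  have hP := mul_le_mul_of_nonneg_left hsob hC
  have hA' : 0 ≤ mu / 2 * ∫ x, u x ^ 2 ∂ν := by positivity
  linarith
end

section
/- Let N ≥ 5, C_N = [N(N−4)(N²−4)]^{(N−4)/8}, and for ε > 0 define U_ε(x) = C_N ε^{(N−4)/2} / (ε² + |x|²)^{(N−4)/2} on ℝ^N. Then U_ε satisfies Δ²U_ε = U_ε^{(N+4)/(N−4)} on ℝ^N. -/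
/-- The Laplacian of a real-valued function on `ℝ^N`, as the sum of the second partial
derivatives in the coordinate directions. -/
noncomputable def lap {N : ℕ} (f : EuclideanSpace ℝ (Fin N) → ℝ)
    (x : EuclideanSpace ℝ (Fin N)) : ℝ :=
  ∑ i : Fin N,
    fderiv ℝ (fun y => fderiv ℝ f y (EuclideanSpace.single i 1)) x (EuclideanSpace.single i 1)

/-- The Talenti function `U_ε(x) = C_N ε^{(N-4)/2} / (ε² + |x|²)^{(N-4)/2}` with
`C_N = [N(N-4)(N²-4)]^{(N-4)/8}`. -/
noncomputable def Ufun (N : ℕ) (ε : ℝ) (x : EuclideanSpace ℝ (Fin N)) : ℝ :=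
  ((N : ℝ) * ((N : ℝ) - 4) * ((N : ℝ) ^ 2 - 4)) ^ (((N : ℝ) - 4) / 8)
    * ε ^ (((N : ℝ) - 4) / 2) / (ε ^ 2 + ‖x‖ ^ 2) ^ (((N : ℝ) - 4) / 2)

/-! Write `U_ε = K s^{-e}` with `s = ε² + |x|²` and `e = (N-4)/2`. For radial powers,
`Δ (a + |x|²)^r = 2r(N+2r-2) (a + |x|²)^{r-1} - 4r(r-1) a (a + |x|²)^{r-2}`, and at `r = -e`
the first coefficient is `-4e`. Applying this formula twice (`Δ` is linear on `C²` functions)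
gives `Δ²U_ε = N(N-4)(N²-4) ε⁴ s⁻⁴ U_ε`, and the factor in front of `U_ε` is exactly
`U_ε^{8/(N-4)}`, because `C_N^{8/(N-4)} = N(N-4)(N²-4)`. -/

section Laplacian

variable {N : ℕ}

theorem lap_const_mul (c : ℝ) (f : EuclideanSpace ℝ (Fin N) → ℝ) :
    lap (fun y => c * f y) = fun x => c * lap f x := by
  ext x
  simp only [lap, Finset.mul_sum]
  refine Finset.sum_congr rfl fun i _ => ?_
  change fderiv ℝ (fun y => fderiv ℝ (c • f) y _) x _ = _
  rw [fderiv_const_smul_field]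
  change fderiv ℝ (c • fun y => fderiv ℝ f y _) x _ = _
  rw [fderiv_const_smul_field]
  rfl

theorem differentiable_fderiv_apply {f : EuclideanSpace ℝ (Fin N) → ℝ} (hf : ContDiff ℝ 2 f)
    (v : EuclideanSpace ℝ (Fin N)) : Differentiable ℝ fun y => fderiv ℝ f y v :=
  ((hf.fderiv_right (m := 1) (by norm_num)).clm_apply contDiff_const).differentiable (by norm_num)

theorem lap_add {f g : EuclideanSpace ℝ (Fin N) → ℝ} (hf : ContDiff ℝ 2 f)
    (hg : ContDiff ℝ 2 g) : lap (fun y => f y + g y) = fun x => lap f x + lap g x := by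
  ext x
  simp only [lap, ← Finset.sum_add_distrib]
  refine Finset.sum_congr rfl fun i _ => ?_
  have hsplit : (fun y => fderiv ℝ (fun y => f y + g y) y (EuclideanSpace.single i 1)) =
      fun y => fderiv ℝ f y (EuclideanSpace.single i 1) +
        fderiv ℝ g y (EuclideanSpace.single i 1) := by
    ext y
    rw [fderiv_fun_add (hf.differentiable (by norm_num) y) (hg.differentiable (by norm_num) y)]
    rfl
  rw [hsplit, fderiv_fun_add (differentiable_fderiv_apply hf _ x)
    (differentiable_fderiv_apply hg _ x)]
  rfl

end Laplacian

section RpowNormSqAdd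

variable {E : Type*} [NormedAddCommGroup E] [InnerProductSpace ℝ E] {a : ℝ}

theorem hasFDerivAt_rpow_norm_sq_add (ha : 0 < a) (r : ℝ) (x : E) :
    HasFDerivAt (fun y : E => (a + ‖y‖ ^ 2) ^ r)
      ((2 * r * (a + ‖x‖ ^ 2) ^ (r - 1)) • innerSL ℝ x) x := by
  have hs : HasFDerivAt (fun y : E => a + ‖y‖ ^ 2) (2 • innerSL ℝ x) x := by
    simpa using ((hasFDerivAt_id x).norm_sq).const_add a
  convert hs.rpow_const (p := r) (Or.inl (by positivity)) using 1
  ext v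
  simp only [smul_apply, innerSL_apply_apply, smul_eq_mul, nsmul_eq_mul]
  ring

theorem contDiff_rpow_norm_sq_add (ha : 0 < a) (r : ℝ) {n : WithTop ℕ∞} :
    ContDiff ℝ n (fun y : E => (a + ‖y‖ ^ 2) ^ r) :=
  (contDiff_const.add (contDiff_norm_sq ℝ)).rpow_const_of_ne fun _ => by positivity

end RpowNormSqAdd

section Coordinates

variable {N : ℕ} {a : ℝ}

theorem fderiv_rpow_norm_sq_add_single (ha : 0 < a) (r : ℝ) (x : EuclideanSpace ℝ (Fin N))
    (i : Fin N) :
    fderiv ℝ (fun y : EuclideanSpace ℝ (Fin N) => (a + ‖y‖ ^ 2) ^ r) x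
        (EuclideanSpace.single i 1) = 2 * r * (a + ‖x‖ ^ 2) ^ (r - 1) * x i := by
  simp [(hasFDerivAt_rpow_norm_sq_add ha r x).fderiv, EuclideanSpace.inner_single_right]

theorem hasFDerivAt_rpow_norm_sq_add_mul_apply (ha : 0 < a) (r : ℝ)
    (x : EuclideanSpace ℝ (Fin N)) (i : Fin N) :
    HasFDerivAt (fun y : EuclideanSpace ℝ (Fin N) => (a + ‖y‖ ^ 2) ^ r * y i)
      (((a + ‖x‖ ^ 2) ^ r) • EuclideanSpace.proj i +
        x i • (2 * r * (a + ‖x‖ ^ 2) ^ (r - 1)) • innerSL ℝ x) x :=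
  (hasFDerivAt_rpow_norm_sq_add ha r x).fun_mul (EuclideanSpace.proj i (𝕜 := ℝ)).hasFDerivAt

theorem lap_rpow_norm_sq_add (ha : 0 < a) (r : ℝ) :
    lap (fun y : EuclideanSpace ℝ (Fin N) => (a + ‖y‖ ^ 2) ^ r) = fun x =>
      2 * r * (N + 2 * r - 2) * (a + ‖x‖ ^ 2) ^ (r - 1)
        - 4 * r * (r - 1) * a * (a + ‖x‖ ^ 2) ^ (r - 2) := by
  ext x
  have hs : 0 < a + ‖x‖ ^ 2 := by positivity
  have hpartial : ∀ i : Fin N,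
      fderiv ℝ (fun y => fderiv ℝ (fun y : EuclideanSpace ℝ (Fin N) => (a + ‖y‖ ^ 2) ^ r) y
        (EuclideanSpace.single i 1)) x (EuclideanSpace.single i 1)
        = 2 * r * ((a + ‖x‖ ^ 2) ^ (r - 1)
          + 2 * (r - 1) * (a + ‖x‖ ^ 2) ^ (r - 2) * x i ^ 2) := by
    intro i
    simp_rw [fderiv_rpow_norm_sq_add_single ha, mul_assoc (2 * r)]
    have hG := hasFDerivAt_rpow_norm_sq_add_mul_apply ha (r - 1) x i
    rw [fderiv_const_mul hG.differentiableAt, hG.fderiv]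
    simp [EuclideanSpace.inner_single_right, show r - 1 - 1 = r - 2 by ring]
    ring
  have hnorm : ∑ i : Fin N, x i ^ 2 = ‖x‖ ^ 2 := by
    simp [EuclideanSpace.norm_sq_eq]
  have hpow : (a + ‖x‖ ^ 2) ^ (r - 1) = (a + ‖x‖ ^ 2) ^ (r - 2) * (a + ‖x‖ ^ 2) := by
    rw [show r - 1 = r - 2 + 1 by ring, Real.rpow_add_one hs.ne']
  simp only [lap, hpartial, mul_add, Finset.sum_add_distrib, Finset.sum_const, Finset.card_univ,
    Fintype.card_fin, nsmul_eq_mul, ← Finset.mul_sum, hnorm, hpow]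
  ring

end Coordinates

section Talenti

variable {N : ℕ} {ε : ℝ}

theorem mul_sub_four_mul_sq_sub_four_pos {n : ℝ} (hn : 4 < n) :
    0 < n * (n - 4) * (n ^ 2 - 4) := by
  have : 0 < n ^ 2 - 4 := by nlinarith
  have : 0 < n - 4 := by linarith
  positivity

theorem Ufun_pos (hN : 4 < N) (hε : 0 < ε) (x : EuclideanSpace ℝ (Fin N)) : 0 < Ufun N ε x := by
  have := mul_sub_four_mul_sq_sub_four_pos (n := N) (by exact_mod_cast hN)
  unfold Ufun
  positivity

theorem Ufun_rpow_critical (hN : 4 < N) (hε : 0 < ε) (x : EuclideanSpace ℝ (Fin N)) :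
    Ufun N ε x ^ (((N : ℝ) + 4) / ((N : ℝ) - 4)) =
      (N : ℝ) * ((N : ℝ) - 4) * ((N : ℝ) ^ 2 - 4) * ε ^ 4 / (ε ^ 2 + ‖x‖ ^ 2) ^ 4
        * Ufun N ε x := by
  have hN' : (4 : ℝ) < N := by exact_mod_cast hN
  have hN4 : (N : ℝ) - 4 ≠ 0 := by linarith
  have hM := mul_sub_four_mul_sq_sub_four_pos hN'
  have hexp : ((N : ℝ) + 4) / ((N : ℝ) - 4) = 8 / ((N : ℝ) - 4) + 1 := by
    field_simp
    ring
  rw [hexp, Real.rpow_add_one (Ufun_pos hN hε x).ne']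
  congr 1
  unfold Ufun
  have h1 : ((N : ℝ) - 4) / 8 * (8 / ((N : ℝ) - 4)) = 1 := by field_simp
  have h4 : ((N : ℝ) - 4) / 2 * (8 / ((N : ℝ) - 4)) = 4 := by field_simp; ring
  rw [Real.div_rpow (by positivity) (by positivity), Real.mul_rpow (by positivity) (by positivity),
    ← Real.rpow_mul hM.le, ← Real.rpow_mul hε.le, ← Real.rpow_mul (by positivity), h1, h4,
    Real.rpow_one, Real.rpow_ofNat, Real.rpow_ofNat]

theorem lap_lap_Ufun (hε : ε ≠ 0) (x : EuclideanSpace ℝ (Fin N)) :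
    lap (lap (Ufun N ε)) x =
      (N : ℝ) * ((N : ℝ) - 4) * ((N : ℝ) ^ 2 - 4) * ε ^ 4 / (ε ^ 2 + ‖x‖ ^ 2) ^ 4
        * Ufun N ε x := by
  set e : ℝ := ((N : ℝ) - 4) / 2 with he
  set K : ℝ := ((N : ℝ) * ((N : ℝ) - 4) * ((N : ℝ) ^ 2 - 4)) ^ (((N : ℝ) - 4) / 8) * ε ^ e
  have hNe : (N : ℝ) = 2 * e + 4 := by rw [he]; ring
  have ha : 0 < ε ^ 2 := by positivity
  have hU : Ufun N ε = fun y => K * (ε ^ 2 + ‖y‖ ^ 2) ^ (-e) := by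
    ext y
    rw [Ufun, Real.rpow_neg (by positivity), div_eq_mul_inv]
  have hlapU : lap (Ufun N ε) = fun y => (-4 * e * K) * (ε ^ 2 + ‖y‖ ^ 2) ^ (-e - 1)
      + (-4 * e * (e + 1) * ε ^ 2 * K) * (ε ^ 2 + ‖y‖ ^ 2) ^ (-e - 2) := by
    rw [hU, lap_const_mul, lap_rpow_norm_sq_add ha]
    ext y
    rw [hNe]
    ring
  rw [hlapU, lap_add (contDiff_const.mul (contDiff_rpow_norm_sq_add ha _))
    (contDiff_const.mul (contDiff_rpow_norm_sq_add ha _)), lap_const_mul, lap_const_mul,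
    lap_rpow_norm_sq_add ha, lap_rpow_norm_sq_add ha, hU]
  have hs : 0 < ε ^ 2 + ‖x‖ ^ 2 := by positivity
  -- Reducing all real powers to `(ε² + ‖x‖²) ^ (-e - 4)` leaves a rational identity.
  have hpow : ∀ (k : ℕ) (r : ℝ), r = -e - 4 + k →
      (ε ^ 2 + ‖x‖ ^ 2) ^ r = (ε ^ 2 + ‖x‖ ^ 2) ^ (-e - 4) * (ε ^ 2 + ‖x‖ ^ 2) ^ k := by
    rintro k r rfl
    exact Real.rpow_add_natCast hs.ne' _ _
  dsimp only
  rw [hpow 2 (-e - 1 - 1) (by push_cast; ring), hpow 1 (-e - 1 - 2) (by push_cast; ring),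
    hpow 1 (-e - 2 - 1) (by push_cast; ring), hpow 0 (-e - 2 - 2) (by push_cast; ring),
    hpow 4 (-e) (by push_cast; ring), hNe]
  field_simp
  ring

end Talenti

theorem stmt15 {N : ℕ} (hN : 5 ≤ N) (ε : ℝ) (hε : 0 < ε) :
    ∀ x : EuclideanSpace ℝ (Fin N),
      lap (lap (Ufun N ε)) x = Ufun N ε x ^ (((N : ℝ) + 4) / ((N : ℝ) - 4)) := by
  intro x
  rw [lap_lap_Ufun hε.ne', Ufun_rpow_critical hN hε]
end

section
/- Let Ω ⊂ ℝ^N (N ≥ 5) be bounded smooth, μ < 0, λ ∈ ℝ, λ₁(Ω) the first Dirichlet eigenvalue of Δ² with eigenfunction φ₁ > 0, and suppose −μ(N−4)/4 + (μ(N−4)/4) ln(−μ(N−4)/4) + λ − λ₁(Ω) ≥ 0. Then there is no positive solution u₀ ∈ H₀²(Ω) of Δ²u₀ = λu₀ + μ u₀ ln u₀² + u₀^{2**−1} with u = ∂u/∂ν = 0 on ∂Ω. -/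
/-!
Testing the equation against `φ` and integrating by parts twice (`u`, `φ` and their gradients
vanish on `∂Ω`) gives `∫_Ω (φ Δ²u - u Δ²φ) = 0`, that is `∫_Ω u φ f(u) = 0` with
`f(t) = λ - λ₁ + μ ln t² + t^q`, `q = 8/(N-4)`. With `s = t^q` and `a = -μ(N-4)/4` we get
`f(t) = λ - λ₁ + s - a ln s ≥ λ - λ₁ + a - a ln a ≥ 0`, with equality only at `s = a`.
Hence `u^q = a` on `Ω`, which contradicts `u = 0` on `∂Ω`.

No regularity of `∂Ω` is needed for the integrations by parts: a `C¹` function vanishing on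
`∂Ω`, extended by zero, is Lipschitz, and its line derivatives vanish a.e. outside `Ω` because
on each line the isolated points of the complement are countable.
-/

open Set Filter Topology MeasureTheory

theorem Set.countable_setOf_not_accPt {X : Type*} [TopologicalSpace X]
    [HereditarilyLindelofSpace X] (C : Set X) : {x ∈ C | ¬AccPt x (𝓟 C)}.Countable := by
  refine (HereditarilyLindelofSpace.isLindelof _).countable (discreteTopology_of_noAccPts ?_)
  exact fun x hx hacc => hx.2 (hacc.mono (principal_mono.2 fun _ hy => hy.1))

theorem deriv_eq_zero_of_accPt {𝕜 F : Type*} [NontriviallyNormedField 𝕜] [NormedAddCommGroup F]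
    [NormedSpace 𝕜 F] {f : 𝕜 → F} {s : Set 𝕜} {x : 𝕜} (hf : EqOn f 0 s) (hx : x ∈ s)
    (hacc : AccPt x (𝓟 s)) : deriv f x = 0 := by
  by_cases hd : DifferentiableAt 𝕜 f x
  · have hzero : HasDerivWithinAt f 0 s x :=
      (hasDerivWithinAt_const x s (0 : F)).congr (fun y hy => hf hy) (hf hx)
    exact hacc.uniqueDiffWithinAt.eq_deriv s hd.hasDerivAt.hasDerivWithinAt hzero
  · exact deriv_zero_of_not_differentiableAt hd

theorem ae_deriv_eq_zero_of_eqOn {F : Type*} [NormedAddCommGroup F] [NormedSpace ℝ F]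
    {μ : Measure ℝ} [NullSingletonClass μ] {f : ℝ → F} {s : Set ℝ} (hf : EqOn f 0 s) :
    ∀ᵐ t ∂μ, t ∈ s → deriv f t = 0 := by
  filter_upwards [compl_mem_ae_iff.2 ((s.countable_setOf_not_accPt).measure_zero μ)] with t ht hts
  exact deriv_eq_zero_of_accPt hf hts (not_not.1 fun h => ht ⟨hts, h⟩)

theorem IsPreconnected.inter_frontier_nonempty {X : Type*} [TopologicalSpace X] {T s : Set X}
    (hT : IsPreconnected T) {x y : X} (hx : x ∈ T ∩ s) (hy : y ∈ T \ s) :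
    (T ∩ frontier s).Nonempty := by
  by_contra hne
  have hsub : T ⊆ interior s ∪ interior sᶜ := fun z hz => by
    rw [← compl_frontier_eq_union_interior]
    exact fun hzf => hne ⟨z, hz, hzf⟩
  have hdisj : Disjoint (interior s) (interior sᶜ) := by
    rw [interior_compl]
    exact disjoint_compl_right_iff_subset.2 (interior_subset.trans subset_closure)
  have hxs : x ∈ interior s := (hsub hx.1).resolve_right fun h => interior_subset h hx.2
  exact hy.2 (interior_subset
    (hT.subset_left_of_subset_union isOpen_interior isOpen_interior hdisj hsub ⟨x, hx.1, hxs⟩ hy.1))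

theorem LipschitzOnWith.lipschitzWith_indicator {E F : Type*} [NormedAddCommGroup E]
    [NormedSpace ℝ E] [NormedAddCommGroup F] {K : NNReal} {h : E → F} {s t : Set E}
    (hh : LipschitzOnWith K h t) (hst : closure s ⊆ t) (hfr : ∀ x ∈ frontier s, h x = 0) :
    LipschitzWith K (s.indicator h) := by
  have crossing : ∀ x ∈ s, ∀ y ∉ s, dist (h x) 0 ≤ K * dist x y := by
    intro x hx y hy
    obtain ⟨z, hz, hzs⟩ := (convex_segment x y).isPreconnected.inter_frontier_nonempty
      ⟨left_mem_segment ℝ x y, hx⟩ ⟨right_mem_segment ℝ x y, hy⟩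
    calc dist (h x) 0 = dist (h x) (h z) := by rw [hfr z hzs]
      _ ≤ K * dist x z :=
        hh.dist_le_mul x (hst (subset_closure hx)) z (hst (frontier_subset_closure hzs))
      _ ≤ K * dist x y := by
        gcongr
        simpa only [dist_eq_norm, norm_sub_rev x] using norm_sub_le_of_mem_segment hz
  refine LipschitzWith.of_dist_le_mul fun x y => ?_
  by_cases hx : x ∈ s <;> by_cases hy : y ∈ s
  · simpa [hx, hy] using hh.dist_le_mul x (hst (subset_closure hx)) y (hst (subset_closure hy))
  · simpa [hx, hy] using crossing x hx y hy
  · simpa [hx, hy, dist_comm] using crossing y hy x hx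
  · simp only [hx, hy, not_false_eq_true, indicator_of_notMem, dist_self]
    positivity

theorem lineDeriv_add_smul {E F : Type*} [NormedAddCommGroup E] [NormedSpace ℝ E]
    [NormedAddCommGroup F] [NormedSpace ℝ F] {f : E → F} (x v : E) (t : ℝ) :
    lineDeriv ℝ f (x + t • v) v = deriv (fun τ : ℝ => f (x + τ • v)) t := by
  rw [lineDeriv, ← zero_add t, ← deriv_comp_add_const, zero_add]
  simp only [add_smul, add_assoc, add_comm (t • v)]

section LineDeriv
variable {E F : Type*} [NormedAddCommGroup E] [NormedSpace ℝ E] [FiniteDimensional ℝ E]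
  [MeasurableSpace E] [BorelSpace E] {μ : Measure E} [μ.IsAddHaarMeasure]
  [NormedAddCommGroup F] [NormedSpace ℝ F] [CompleteSpace F] [MeasurableSpace F] [BorelSpace F]

theorem ae_lineDeriv_eq_zero_of_eqOn {f : E → F} (hf : Continuous f) {s : Set E}
    (hs : MeasurableSet s) (hfs : EqOn f 0 s) (v : E) :
    ∀ᵐ x ∂μ, x ∈ s → lineDeriv ℝ f x v = 0 := by
  have hmeas : MeasurableSet {x | x ∈ s → lineDeriv ℝ f x v = 0} := by
    simp only [imp_iff_not_or]
    exact hs.compl.union (measurable_lineDeriv hf (measurableSet_singleton 0))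
  refine ae_mem_of_ae_add_linearMap_mem (LinearMap.toSpanSingleton ℝ E v) volume μ hmeas
    fun y => ?_
  filter_upwards [ae_deriv_eq_zero_of_eqOn (μ := volume)
    (s := {t : ℝ | y + t • v ∈ s}) (f := fun t => f (y + t • v)) fun t ht => hfs ht] with t ht
  intro hys
  simpa [lineDeriv_add_smul] using ht hys

theorem integral_fderiv_eq_zero_of_frontier {w : E → ℝ} {Ω : Set E} (hΩo : IsOpen Ω)
    (hΩb : Bornology.IsBounded Ω) (hw : ContDiff ℝ 1 w) (hfr : ∀ x ∈ frontier Ω, w x = 0)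
    (v : E) : ∫ x in Ω, fderiv ℝ w x v ∂μ = 0 := by
  obtain ⟨R, hR0, hR⟩ := hΩb.closure.subset_closedBall_lt 0 (0 : E)
  obtain ⟨K, hK⟩ := hw.contDiffOn.exists_lipschitzOnWith one_ne_zero (convex_closedBall 0 R)
    (isCompact_closedBall 0 R)
  set G := Ω.indicator w
  have hG : LipschitzWith K G := hK.lipschitzWith_indicator hR hfr
  let bump : ContDiffBump (0 : E) := ⟨R, R + 1, hR0, by linarith⟩
  have hbump : ∀ x ∈ closure Ω, bump x = 1 := fun x hx => bump.one_of_mem_closedBall (hR hx)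
  obtain ⟨D, hD⟩ := bump.contDiff.lipschitzWith_of_hasCompactSupport bump.hasCompactSupport
    (n := 1) one_ne_zero
  -- `integral_lineDeriv_mul_eq` needs a compactly supported partner; `bump = 1` near
  -- `closure Ω` makes it invisible on both sides.
  have hparts := hG.integral_lineDeriv_mul_eq hD bump.hasCompactSupport v (μ := μ)
  have hright : ∀ x, lineDeriv ℝ bump x (-v) * G x = 0 := by
    intro x
    by_cases hx : x ∈ Ω
    · have hloc : (bump : E → ℝ) =ᶠ[𝓝 x] fun _ => 1 :=
        mem_of_superset (hΩo.mem_nhds hx) fun y hy => hbump y (subset_closure hy)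
      rw [hloc.lineDeriv_eq]
      simp [lineDeriv]
    · simp [G, hx]
  have hleft :
      (fun x => lineDeriv ℝ G x v * bump x) =ᵐ[μ] Ω.indicator fun x => fderiv ℝ w x v := by
    filter_upwards [ae_lineDeriv_eq_zero_of_eqOn hG.continuous hΩo.measurableSet.compl
      (fun x hx => indicator_of_notMem hx w) v] with x hx
    by_cases hxΩ : x ∈ Ω
    · have hloc : G =ᶠ[𝓝 x] w :=
        mem_of_superset (hΩo.mem_nhds hxΩ) fun y hy => indicator_of_mem hy w
      rw [hloc.lineDeriv_eq, (hw.differentiable one_ne_zero x).lineDeriv_eq_fderiv,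
        hbump x (subset_closure hxΩ), mul_one, indicator_of_mem hxΩ]
    · rw [hx hxΩ, zero_mul, indicator_of_notMem hxΩ]
  rw [← integral_indicator hΩo.measurableSet, ← integral_congr_ae hleft, hparts]
  simp [hright]

end LineDeriv

theorem ContDiff.fderiv_apply_const {E : Type*} [NormedAddCommGroup E] [NormedSpace ℝ E]
    {f : E → ℝ} {n : ℕ} (hf : ContDiff ℝ (n + 1) f) (v : E) :
    ContDiff ℝ n fun y => fderiv ℝ f y v :=
  (hf.fderiv_right (by norm_cast)).clm_apply contDiff_const

theorem fderiv_mul_fderiv_sub_mul_fderiv {E : Type*} [NormedAddCommGroup E] [NormedSpace ℝ E]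
    {f g : E → ℝ} (hf : ContDiff ℝ 2 f) (hg : ContDiff ℝ 2 g) (v x : E) :
    fderiv ℝ (fun y => f y * fderiv ℝ g y v - g y * fderiv ℝ f y v) x v
      = f x * fderiv ℝ (fun y => fderiv ℝ g y v) x v
        - g x * fderiv ℝ (fun y => fderiv ℝ f y v) x v := by
  have hf' := (hf.fderiv_apply_const (n := 1) v).differentiable one_ne_zero x
  have hg' := (hg.fderiv_apply_const (n := 1) v).differentiable one_ne_zero x
  have hfd := hf.differentiable two_ne_zero x
  have hgd := hg.differentiable two_ne_zero x
  have hW : HasFDerivAt (fun y => f y * fderiv ℝ g y v - g y * fderiv ℝ f y v) _ x :=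
    (hfd.hasFDerivAt.mul hg'.hasFDerivAt).sub (hgd.hasFDerivAt.mul hf'.hasFDerivAt)
  rw [hW.fderiv]
  simp only [sub_apply, add_apply, smul_apply, smul_eq_mul]
  ring

theorem Continuous.integrableOn_of_isBounded {X E : Type*} [MetricSpace X] [ProperSpace X]
    [MeasurableSpace X] [OpensMeasurableSpace X] {μ : Measure X} [IsFiniteMeasureOnCompacts μ]
    [NormedAddCommGroup E] {f : X → E} (hf : Continuous f) {s : Set X}
    (hs : Bornology.IsBounded s) : IntegrableOn f s μ :=
  (hf.continuousOn.integrableOn_compact hs.isCompact_closure).mono_set subset_closure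

theorem IsOpen.eqOn_zero_of_setIntegral_eq_zero {X : Type*} [TopologicalSpace X]
    [MeasurableSpace X] [OpensMeasurableSpace X] {μ : Measure X} [μ.IsOpenPosMeasure]
    {U : Set X} {f : X → ℝ} (hU : IsOpen U) (hf : ContinuousOn f U) (hint : IntegrableOn f U μ)
    (hnn : ∀ x ∈ U, 0 ≤ f x) (h0 : ∫ x in U, f x ∂μ = 0) : EqOn f 0 U :=
  Measure.eqOn_open_of_ae_eq ((setIntegral_eq_zero_iff_of_nonneg_ae
    (ae_restrict_of_forall_mem hU.measurableSet hnn) hint).1 h0) hU hf continuousOn_const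

section Laplacian
variable {N : ℕ}

theorem ContDiff.lap {f : EuclideanSpace ℝ (Fin N) → ℝ} {n : ℕ} (hf : ContDiff ℝ (n + 2) f) :
    ContDiff ℝ n (lap f) :=
  ContDiff.sum fun _ _ => (hf.fderiv_apply_const (n := n + 1) _).fderiv_apply_const _

theorem mul_lap_sub_mul_lap {f g : EuclideanSpace ℝ (Fin N) → ℝ} (hf : ContDiff ℝ 2 f)
    (hg : ContDiff ℝ 2 g) (x : EuclideanSpace ℝ (Fin N)) :
    f x * lap g x - g x * lap f x = ∑ i, fderiv ℝ (fun y =>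
      f y * fderiv ℝ g y (EuclideanSpace.single i 1)
        - g y * fderiv ℝ f y (EuclideanSpace.single i 1)) x (EuclideanSpace.single i 1) := by
  simp only [lap, Finset.mul_sum, ← Finset.sum_sub_distrib,
    fderiv_mul_fderiv_sub_mul_fderiv hf hg]

theorem integral_mul_lap_eq {Ω : Set (EuclideanSpace ℝ (Fin N))} (hΩo : IsOpen Ω)
    (hΩb : Bornology.IsBounded Ω) {f g : EuclideanSpace ℝ (Fin N) → ℝ} (hf : ContDiff ℝ 2 f)
    (hg : ContDiff ℝ 2 g) (hfr : ∀ x ∈ frontier Ω, f x = 0 ∧ fderiv ℝ f x = 0) :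
    ∫ x in Ω, f x * lap g x = ∫ x in Ω, g x * lap f x := by
  have hW : ∀ v, ContDiff ℝ 1 fun y => f y * fderiv ℝ g y v - g y * fderiv ℝ f y v := fun v =>
    ((hf.of_le one_le_two).mul (hg.fderiv_apply_const (n := 1) v)).sub
      ((hg.of_le one_le_two).mul (hf.fderiv_apply_const (n := 1) v))
  rw [← sub_eq_zero, ← integral_sub, funext (mul_lap_sub_mul_lap hf hg), integral_finsetSum]
  · refine Finset.sum_eq_zero fun i _ => integral_fderiv_eq_zero_of_frontier hΩo hΩb (hW _) ?_ _
    intro x hx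
    simp [(hfr x hx).1, (hfr x hx).2]
  · exact fun i _ =>
      ((hW _).fderiv_apply_const (n := 0) _).continuous.integrableOn_of_isBounded hΩb
  · exact (hf.continuous.mul (hg.lap (n := 0)).continuous).integrableOn_of_isBounded hΩb
  · exact (hg.continuous.mul (hf.lap (n := 0)).continuous).integrableOn_of_isBounded hΩb

theorem integral_mul_lap_lap_eq {Ω : Set (EuclideanSpace ℝ (Fin N))} (hΩo : IsOpen Ω)
    (hΩb : Bornology.IsBounded Ω) {f g : EuclideanSpace ℝ (Fin N) → ℝ} (hf : ContDiff ℝ 4 f)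
    (hg : ContDiff ℝ 4 g) (hfr : ∀ x ∈ frontier Ω, f x = 0 ∧ fderiv ℝ f x = 0)
    (hgr : ∀ x ∈ frontier Ω, g x = 0 ∧ fderiv ℝ g x = 0) :
    ∫ x in Ω, f x * lap (lap g) x = ∫ x in Ω, g x * lap (lap f) x := by
  rw [integral_mul_lap_eq hΩo hΩb (hf.of_le (by norm_num)) (hg.lap (n := 2)) hfr,
    integral_mul_lap_eq hΩo hΩb (hg.of_le (by norm_num)) (hf.lap (n := 2)) hgr]
  simp_rw [mul_comm]

end Laplacian

theorem sub_mul_log_lt_of_ne {a s : ℝ} (ha : 0 < a) (hs : 0 < s) (hsa : s ≠ a) :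
    a - a * Real.log a < s - a * Real.log s := by
  have h := Real.log_lt_sub_one_of_pos (div_pos hs ha) (by rwa [ne_eq, div_eq_one_iff_eq ha.ne'])
  rw [Real.log_div hs.ne' ha.ne'] at h
  have h' := mul_lt_mul_of_pos_left h ha
  have hsa' : a * (s / a - 1) = s - a := by field_simp
  linarith

theorem sub_mul_log_le_of_pos {a s : ℝ} (ha : 0 < a) (hs : 0 < s) :
    a - a * Real.log a ≤ s - a * Real.log s := by
  rcases eq_or_ne s a with rfl | hsa
  · rfl
  · exact (sub_mul_log_lt_of_ne ha hs hsa).le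

section Nonlinearity
variable {lam lam1 mu a q t : ℝ}

theorem mul_log_sq_add_rpow (hmu : 2 * mu = -(a * q)) (ht : 0 < t) :
    mu * Real.log (t ^ 2) + t ^ q = t ^ q - a * Real.log (t ^ q) := by
  rw [Real.log_pow, Real.log_rpow ht]
  linear_combination Real.log t * hmu

theorem nonlinearity_nonneg (ha : 0 < a) (hmu : 2 * mu = -(a * q))
    (hcond : 0 ≤ a - a * Real.log a + lam - lam1) (ht : 0 < t) :
    0 ≤ lam - lam1 + mu * Real.log (t ^ 2) + t ^ q := by
  rw [add_assoc, mul_log_sq_add_rpow hmu ht]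
  linarith [sub_mul_log_le_of_pos ha (Real.rpow_pos_of_pos ht q)]

theorem nonlinearity_pos (ha : 0 < a) (hmu : 2 * mu = -(a * q))
    (hcond : 0 ≤ a - a * Real.log a + lam - lam1) (ht : 0 < t) (hta : t ^ q ≠ a) :
    0 < lam - lam1 + mu * Real.log (t ^ 2) + t ^ q := by
  rw [add_assoc, mul_log_sq_add_rpow hmu ht]
  linarith [sub_mul_log_lt_of_ne ha (Real.rpow_pos_of_pos ht q) hta]

end Nonlinearity

theorem eq_zero_of_eqOn_const_of_frontier {E : Type*} [NormedAddCommGroup E] [NormedSpace ℝ E]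
    [Nontrivial E] {Ω : Set E} (hΩb : Bornology.IsBounded Ω) (hΩne : Ω.Nonempty) {f : E → ℝ}
    (hf : Continuous f) (hfr : ∀ x ∈ frontier Ω, f x = 0) {c : ℝ} (hfc : EqOn f (fun _ => c) Ω) :
    c = 0 := by
  obtain ⟨x₀, hx₀⟩ : (frontier Ω).Nonempty :=
    nonempty_frontier_iff.2 ⟨hΩne, fun h => NormedSpace.unbounded_univ ℝ E (h ▸ hΩb)⟩
  exact (hfc.closure hf continuous_const (frontier_subset_closure hx₀)).symm.trans (hfr x₀ hx₀)

theorem eqOn_rpow_of_bilap_eq {N : ℕ} {Ω : Set (EuclideanSpace ℝ (Fin N))} (hΩo : IsOpen Ω)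
    (hΩb : Bornology.IsBounded Ω) {lam mu lam1 a q : ℝ} (ha : 0 < a) (hmu : 2 * mu = -(a * q))
    (hcond : 0 ≤ a - a * Real.log a + lam - lam1) {φ u : EuclideanSpace ℝ (Fin N) → ℝ}
    (hφ : ContDiff ℝ 4 φ) (hφpos : ∀ x ∈ Ω, 0 < φ x)
    (hφbc : ∀ x ∈ frontier Ω, φ x = 0 ∧ fderiv ℝ φ x = 0)
    (hφeig : ∀ x ∈ Ω, lap (lap φ) x = lam1 * φ x)
    (hu : ContDiff ℝ 4 u) (hupos : ∀ x ∈ Ω, 0 < u x)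
    (hubc : ∀ x ∈ frontier Ω, u x = 0 ∧ fderiv ℝ u x = 0)
    (hueq : ∀ x ∈ Ω, lap (lap u) x
      = lam * u x + mu * u x * Real.log (u x ^ 2) + u x ^ (1 + q)) :
    EqOn (fun x => u x ^ q) (fun _ => a) Ω := by
  set D := fun x => φ x * lap (lap u) x - u x * lap (lap φ) x
  have hD : ∀ x ∈ Ω, D x = u x * φ x * (lam - lam1 + mu * Real.log (u x ^ 2) + u x ^ q) := by
    intro x hx
    simp only [D, hueq x hx, hφeig x hx, Real.rpow_add (hupos x hx), Real.rpow_one]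
    ring
  have hcont : ∀ {f g : EuclideanSpace ℝ (Fin N) → ℝ}, ContDiff ℝ 4 f → ContDiff ℝ 4 g →
      Continuous fun x => f x * lap (lap g) x := fun hf hg =>
    hf.continuous.mul ((hg.lap (n := 2)).lap (n := 0)).continuous
  have hDcont : Continuous D := (hcont hφ hu).sub (hcont hu hφ)
  have hD0 : EqOn D 0 Ω := by
    refine hΩo.eqOn_zero_of_setIntegral_eq_zero (μ := volume) hDcont.continuousOn
      (hDcont.integrableOn_of_isBounded hΩb) (fun x hx => ?_) ?_
    · rw [hD x hx]
      exact mul_nonneg (mul_pos (hupos x hx) (hφpos x hx)).le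
        (nonlinearity_nonneg ha hmu hcond (hupos x hx))
    · rw [integral_sub ((hcont hφ hu).integrableOn_of_isBounded hΩb)
        ((hcont hu hφ).integrableOn_of_isBounded hΩb),
        integral_mul_lap_lap_eq hΩo hΩb hφ hu hφbc hubc, sub_self]
  intro x hx
  by_contra hne
  have hDx := hD0 hx
  rw [hD x hx] at hDx
  exact (mul_pos (mul_pos (hupos x hx) (hφpos x hx))
    (nonlinearity_pos ha hmu hcond (hupos x hx) hne)).ne' hDx

theorem stmt19_general {N : ℕ} (hN : 5 ≤ N) (Ω : Set (EuclideanSpace ℝ (Fin N)))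
    (hΩo : IsOpen Ω) (hΩb : Bornology.IsBounded Ω) (hΩne : Ω.Nonempty)
    (lam mu lam1 : ℝ) (hmu : mu < 0)
    (φ : EuclideanSpace ℝ (Fin N) → ℝ) (hφsm : ContDiff ℝ 4 φ)
    (hφpos : ∀ x ∈ Ω, 0 < φ x)
    (hφbc : ∀ x ∈ frontier Ω, φ x = 0 ∧ fderiv ℝ φ x = 0)
    (hφeig : ∀ x ∈ Ω, lap (lap φ) x = lam1 * φ x)
    (hcond : 0 ≤ -mu * ((N : ℝ) - 4) / 4
        + mu * ((N : ℝ) - 4) / 4 * Real.log (-mu * ((N : ℝ) - 4) / 4) + lam - lam1) :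
    ¬ ∃ u : EuclideanSpace ℝ (Fin N) → ℝ, ContDiff ℝ 4 u
        ∧ (∀ x ∈ Ω, 0 < u x)
        ∧ (∀ x ∈ frontier Ω, u x = 0 ∧ fderiv ℝ u x = 0)
        ∧ (∀ x ∈ Ω, lap (lap u) x
            = lam * u x + mu * u x * Real.log (u x ^ 2)
              + u x ^ (((N : ℝ) + 4) / ((N : ℝ) - 4))) := by
  rintro ⟨u, hu, hupos, hubc, hueq⟩
  have hN4 : (0 : ℝ) < N - 4 := by
    have : (5 : ℝ) ≤ N := by exact_mod_cast hN
    linarith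
  set q : ℝ := 8 / (N - 4) with hq_def
  set a : ℝ := -mu * (N - 4) / 4 with ha_def
  have hq : 0 < q := by positivity
  have ha : 0 < a := div_pos (mul_pos (neg_pos.2 hmu) hN4) four_pos
  have hmuaq : 2 * mu = -(a * q) := by
    rw [ha_def, hq_def]
    field_simp
    ring
  have hexp : ((N : ℝ) + 4) / (N - 4) = 1 + q := by
    rw [hq_def]
    field_simp
    ring
  rw [hexp] at hueq
  have hpow := eqOn_rpow_of_bilap_eq hΩo hΩb ha hmuaq (by linear_combination hcond) hφsm hφpos
    hφbc hφeig hu hupos hubc hueq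
  have : Nonempty (Fin N) := ⟨⟨0, by omega⟩⟩
  refine ha.ne' (eq_zero_of_eqOn_const_of_frontier hΩb hΩne
    (hu.continuous.rpow_const fun _ => Or.inr hq.le) (fun x hx => ?_) hpow)
  simp [(hubc x hx).1, Real.zero_rpow hq.ne']

theorem stmt19 {N : ℕ} (hN : 5 ≤ N) (Ω : Set (EuclideanSpace ℝ (Fin N)))
    (hΩo : IsOpen Ω) (hΩb : Bornology.IsBounded Ω) (hΩne : Ω.Nonempty)
    (lam mu lam1 : ℝ) (hmu : mu < 0) (hlam1 : 0 < lam1)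
    (φ : EuclideanSpace ℝ (Fin N) → ℝ) (hφsm : ContDiff ℝ 4 φ)
    (hφpos : ∀ x ∈ Ω, 0 < φ x)
    (hφbc : ∀ x ∈ frontier Ω, φ x = 0 ∧ fderiv ℝ φ x = 0)
    (hφeig : ∀ x ∈ Ω, lap (lap φ) x = lam1 * φ x)
    (hcond : 0 ≤ -mu * ((N : ℝ) - 4) / 4
        + mu * ((N : ℝ) - 4) / 4 * Real.log (-mu * ((N : ℝ) - 4) / 4) + lam - lam1) :
    ¬ ∃ u : EuclideanSpace ℝ (Fin N) → ℝ, ContDiff ℝ 4 u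
        ∧ (∀ x ∈ Ω, 0 < u x)
        ∧ (∀ x ∈ frontier Ω, u x = 0 ∧ fderiv ℝ u x = 0)
        ∧ (∀ x ∈ Ω, lap (lap u) x
            = lam * u x + mu * u x * Real.log (u x ^ 2)
              + u x ^ (((N : ℝ) + 4) / ((N : ℝ) - 4))) :=
  stmt19_general hN Ω hΩo hΩb hΩne lam mu lam1 hmu φ hφsm hφpos hφbc hφeig hcond
end
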